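/- arXiv:1809.00229 — 2 statements merged into one kernel-verified Lean document; each statement's English description precedes it below -/
import Mathlib

section
/- Let q₀ ∈ L²(0,π), α ∈ ℝ, k ≥ 1, and suppose μ ∈ ℝ is the k-th eigenvalue of L[q₀] (i.e., L[q₀] admits an eigenfunction with eigenvalue μ, boundary parameter α, and exactly k−1 zeros in (0,π)). Then for every λ ≥ μ, the nonlinear problem (NP_{+1}) (with potential q₀, spectral parameter λ and boundary parameter α) has no nonzero solution having at most k−1 zeros in the open interval (0,π). -/
open MeasureTheory Set Real

noncomputable section

/-- Lebesgue measure restricted to the open interval (0, π). -/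
def μI : Measure ℝ := volume.restrict (Set.Ioo 0 Real.pi)

/-- `q` belongs to `L²(0,π)`. -/
def MemL2 (q : ℝ → ℝ) : Prop := MemLp q 2 μI

/-- The `L²(0,π)` norm. -/
def l2norm (q : ℝ → ℝ) : ℝ := (eLpNorm q 2 μI).toReal

/-- `u` is `C¹` on `[0,π]` with derivative `u'`, and `u'` is absolutely continuous
with a.e. (integrable) derivative `u''`, expressed via the fundamental theorem of
calculus: `u' x = u' 0 + ∫_0^x u''`. -/
def IsC2AC (u u' u'' : ℝ → ℝ) : Prop :=
  (∀ x ∈ Set.Icc (0:ℝ) Real.pi, HasDerivWithinAt u (u' x) (Set.Icc 0 Real.pi) x) ∧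
  ContinuousOn u' (Set.Icc 0 Real.pi) ∧
  IntervalIntegrable u'' MeasureTheory.volume 0 Real.pi ∧
  (∀ x ∈ Set.Icc (0:ℝ) Real.pi, u' x = u' 0 + ∫ t in (0:ℝ)..x, u'' t)

/-- Separated boundary conditions with boundary parameter `α`. -/
def BC (α : ℝ) (u u' : ℝ → ℝ) : Prop :=
  u 0 * Real.cos α + u' 0 * Real.sin α = 0 ∧
  u Real.pi * Real.cos α + u' Real.pi * Real.sin α = 0

/-- `u` is not identically zero on `[0,π]`. -/
def Nonzero (u : ℝ → ℝ) : Prop := ∃ x ∈ Set.Icc (0:ℝ) Real.pi, u x ≠ 0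

/-- The set of zeros of `u` in the open interval `(0,π)`. -/
def ZeroSet (u : ℝ → ℝ) : Set ℝ := {x ∈ Set.Ioo (0:ℝ) Real.pi | u x = 0}

/-- `u` (with derivative `u'` and a.e. second derivative `u''`) is an eigenfunction of
the Sturm–Liouville operator `L[q]u = -u'' + q u` with eigenvalue `lam` and boundary
parameter `α`. -/
def IsEigenfun (q : ℝ → ℝ) (α lam : ℝ) (u u' u'' : ℝ → ℝ) : Prop :=
  IsC2AC u u' u'' ∧ MemLp u'' 2 μI ∧
  (∀ᵐ x ∂μI, -u'' x + q x * u x = lam * u x) ∧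
  Nonzero u ∧ BC α u u'

/-- `lam` is the `k`-th eigenvalue of `L[q]` (boundary parameter `α`): there is an
eigenfunction with eigenvalue `lam` having exactly `k-1` zeros in `(0,π)`. -/
def HasEigenK (q : ℝ → ℝ) (α lam : ℝ) (k : ℕ) : Prop :=
  ∃ u u' u'', IsEigenfun q α lam u u' u'' ∧
    (ZeroSet u).Finite ∧ (ZeroSet u).ncard = k - 1

/-- The admissible set `A_k(lam)` of potentials `q ∈ L²(0,π)` for which `lam` is the
`k`-th eigenvalue of `L[q]`. -/
def Adm (α lam : ℝ) (k : ℕ) : Set (ℝ → ℝ) := {q | MemL2 q ∧ HasEigenK q α lam k}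

/-- `u` is a solution of the nonlinear problem `(NP_δ)`:
`-u'' + q₀ u = lam u + δ u³` a.e. in `(0,π)` with separated boundary conditions. -/
def IsNPSol (q₀ : ℝ → ℝ) (α lam δ : ℝ) (u u' u'' : ℝ → ℝ) : Prop :=
  IsC2AC u u' u'' ∧
  (∀ᵐ x ∂μI, -u'' x + q₀ x * u x = lam * u x + δ * (u x) ^ 3) ∧
  BC α u u'

/-!
Let `v` be an eigenfunction for `μ` with `k - 1` zeros in `(0, π)`; together with `0` and `π`
they cut `[0, π]` into `k` nodal intervals. For a solution `u` of `(NP₊)` the Wronskian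
`W = u v' - u' v` satisfies `W' = (lam - μ + u²) u v` a.e. If `u` had no zero inside a nodal
interval, `uv` would have a constant sign `σ` there, so `σ W` would strictly increase across it;
but at each end either the common boundary condition makes `W` vanish or `v` vanishes, and then
`σ W ≥ 0` on the left and `σ W ≤ 0` on the right. So `u` has at least `k` zeros in `(0, π)`.
-/

open Topology

theorem AbsolutelyContinuousOnInterval.congr {X : Type*} [PseudoMetricSpace X] {f g : ℝ → X}
    {a b : ℝ} (hf : AbsolutelyContinuousOnInterval f a b) (hfg : EqOn f g (uIcc a b)) :
    AbsolutelyContinuousOnInterval g a b := by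
  refine hf.congr' (Filter.eventually_inf_principal.2 (Filter.Eventually.of_forall ?_))
  rintro ⟨n, I⟩ ⟨hI, -⟩
  exact Finset.sum_congr rfl fun i hi => by rw [hfg (hI i hi).1, hfg (hI i hi).2]

theorem absolutelyContinuousOnInterval_of_eq_add_integral {f g : ℝ → ℝ} {a b : ℝ}
    (hg : IntervalIntegrable g volume a b)
    (hf : ∀ x ∈ uIcc a b, f x = f a + ∫ t in a..x, g t) :
    AbsolutelyContinuousOnInterval f a b :=
  ((LipschitzWith.const (f a)).lipschitzOnWith.absolutelyContinuousOnInterval.fun_add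
    (hg.absolutelyContinuousOnInterval_intervalIntegral left_mem_uIcc)).congr
    fun x hx => (hf x hx).symm

theorem ae_hasDerivAt_of_eq_add_integral {f g : ℝ → ℝ} {a b : ℝ}
    (hg : IntervalIntegrable g volume a b)
    (hf : ∀ x ∈ Icc a b, f x = f a + ∫ t in a..x, g t) :
    ∀ᵐ x, x ∈ Ioo a b → HasDerivAt f (g x) x := by
  filter_upwards [hg.ae_hasDerivAt_integral] with x hx hxab
  have hIcc : Icc a b ∈ 𝓝 x := Icc_mem_nhds hxab.1 hxab.2
  have hmem : x ∈ uIcc a b := Icc_subset_uIcc (Ioo_subset_Icc_self hxab)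
  exact ((hx hmem a left_mem_uIcc).const_add (f a)).congr_of_eventuallyEq
    (Filter.eventually_of_mem hIcc hf)

theorem ae_mem_Ioc_imp_of_ae_mem_Ioo {p : ℝ → Prop} {a b c d : ℝ} (hca : c ≤ a) (hbd : b ≤ d)
    (h : ∀ᵐ x, x ∈ Ioo c d → p x) : ∀ᵐ x, x ∈ Ioc a b → p x := by
  filter_upwards [h, (countable_singleton d).ae_notMem volume] with x hx hxd hxab
  exact hx ⟨hca.trans_lt hxab.1, (hxab.2.trans hbd).lt_of_ne hxd⟩

theorem AbsolutelyContinuousOnInterval.integral_eq_sub_of_ae_hasDerivAt {f f' : ℝ → ℝ}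
    {a b : ℝ} (hab : a ≤ b) (hf : AbsolutelyContinuousOnInterval f a b)
    (hf' : ∀ᵐ x, x ∈ Ioo a b → HasDerivAt f (f' x) x) :
    ∫ x in a..b, f' x = f b - f a := by
  rw [← hf.integral_deriv_eq_sub]
  refine intervalIntegral.integral_congr_ae ?_
  rw [uIoc_of_le hab]
  filter_upwards [ae_mem_Ioc_imp_of_ae_mem_Ioo le_rfl le_rfl hf'] with x hx hxab
  exact (hx hxab).deriv.symm

theorem HasDerivWithinAt.nonneg_of_left_eq_zero {f : ℝ → ℝ} {d a b : ℝ} (hab : a < b)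
    (hd : HasDerivWithinAt f d (Icc a b) a) (hfa : f a = 0)
    (hf : ∀ x ∈ Ioo a b, 0 ≤ f x) : 0 ≤ d := by
  have hne : (𝓝[Ioo a b] a).NeBot :=
    mem_closure_iff_nhdsWithin_neBot.mp (by rw [closure_Ioo hab.ne]; exact left_mem_Icc.2 hab.le)
  refine ge_of_tendsto ((hasDerivWithinAt_iff_tendsto_slope.mp hd).mono_left
    (nhdsWithin_mono _ fun x hx => ⟨Ioo_subset_Icc_self hx, hx.1.ne'⟩))
    (Filter.eventually_of_mem self_mem_nhdsWithin fun x hx => ?_)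
  rw [slope_def_field, hfa, sub_zero]
  exact div_nonneg (hf x hx) (sub_nonneg.2 hx.1.le)

theorem HasDerivWithinAt.nonpos_of_right_eq_zero {f : ℝ → ℝ} {d a b : ℝ} (hab : a < b)
    (hd : HasDerivWithinAt f d (Icc a b) b) (hfb : f b = 0)
    (hf : ∀ x ∈ Ioo a b, 0 ≤ f x) : d ≤ 0 := by
  have hne : (𝓝[Ioo a b] b).NeBot :=
    mem_closure_iff_nhdsWithin_neBot.mp (by rw [closure_Ioo hab.ne]; exact right_mem_Icc.2 hab.le)
  refine le_of_tendsto ((hasDerivWithinAt_iff_tendsto_slope.mp hd).mono_left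
    (nhdsWithin_mono _ fun x hx => ⟨Ioo_subset_Icc_self hx, hx.2.ne⟩))
    (Filter.eventually_of_mem self_mem_nhdsWithin fun x hx => ?_)
  rw [slope_def_field, hfb, sub_zero]
  exact div_nonpos_of_nonneg_of_nonpos (hf x hx) (sub_nonpos.2 hx.2.le)

theorem IsPreconnected.exists_pos_mul_of_ne_zero {X : Type*} [TopologicalSpace X] {s : Set X}
    {f : X → ℝ} (hs : IsPreconnected s) (hf : ContinuousOn f s) (hf0 : ∀ x ∈ s, f x ≠ 0) :
    ∃ σ : ℝ, ∀ x ∈ s, 0 < σ * f x := by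
  rcases s.eq_empty_or_nonempty with rfl | ⟨x₀, hx₀⟩
  · exact ⟨1, by simp⟩
  refine ⟨f x₀, fun x hx => ?_⟩
  by_contra! hneg
  have hzero : (0 : ℝ) ∈ f '' s := by
    rcases mul_nonpos_iff.1 hneg with ⟨h₀, h⟩ | ⟨h₀, h⟩
    · exact hs.intermediate_value hx hx₀ hf ⟨h, h₀⟩
    · exact hs.intermediate_value hx₀ hx hf ⟨h₀, h⟩
  obtain ⟨y, hy, hy0⟩ := hzero
  exact hf0 y hy hy0

theorem ncard_le_ncard_add_one_of_exists_mem_Ioo {S Z : Set ℝ} (hS : S.Finite) (hZ : Z.Finite)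
    (h : ∀ a ∈ S, ∀ b ∈ S, a < b → (∀ x ∈ Ioo a b, x ∉ S) → ∃ z ∈ Z, z ∈ Ioo a b) :
    S.ncard ≤ Z.ncard + 1 := by
  classical
  obtain ⟨S, rfl⟩ := hS.exists_finset_coe
  clear hS
  rw [ncard_coe_finset]
  induction S using Finset.induction_on_max generalizing Z with
  | empty => simp
  | insert a s has ih =>
    rcases s.eq_empty_or_nonempty with rfl | hs
    · simp
    have hm := s.max'_mem hs
    obtain ⟨z, hzZ, hz⟩ := h _ (by simp [hm]) a (by simp) (has _ hm) fun x hx hxS => by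
      rcases Finset.mem_insert.1 hxS with rfl | hxs
      · exact hx.2.false
      · exact (s.le_max' x hxs).not_gt hx.1
    have hs_card := ih (hZ.sdiff (t := {z})) fun c hc d hd hcd hgap => by
      obtain ⟨z', hz'Z, hz'⟩ := h c (by simp [hc]) d (by simp [hd]) hcd fun x hx hxS => by
        rcases Finset.mem_insert.1 hxS with rfl | hxs
        · exact (hx.2.trans (has d hd)).false
        · exact hgap x hx hxs
      refine ⟨z', ⟨hz'Z, fun hzz => ?_⟩, hz'⟩
      have : z' < z := hz'.2.trans_le ((s.le_max' d hd).trans hz.1.le)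
      exact this.ne (mem_singleton_iff.1 hzz)
    rw [Finset.card_insert_of_notMem fun ha => (has a ha).false]
    have := ncard_sdiff_singleton_add_one hzZ hZ
    omega

theorem mul_sub_mul_eq_zero_of_cos_sin {x y z w α : ℝ} (h₁ : x * cos α + y * sin α = 0)
    (h₂ : z * cos α + w * sin α = 0) : x * w - y * z = 0 := by
  linear_combination (cos α * w - sin α * z) * h₁ + (sin α * x - cos α * y) * h₂
    - (x * w - y * z) * sin_sq_add_cos_sq α

def wronskian (u u' v v' : ℝ → ℝ) (x : ℝ) : ℝ := u x * v' x - u' x * v x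

theorem BC.wronskian_eq_zero {α : ℝ} {u u' v v' : ℝ → ℝ} (hu : BC α u u') (hv : BC α v v') :
    wronskian u u' v v' 0 = 0 ∧ wronskian u u' v v' π = 0 :=
  ⟨mul_sub_mul_eq_zero_of_cos_sin hu.1 hv.1, mul_sub_mul_eq_zero_of_cos_sin hu.2 hv.2⟩

theorem wronskian_nonneg_of_left_eq_zero {u u' v v' : ℝ → ℝ} {a b σ : ℝ} (hab : a < b)
    (hu : HasDerivWithinAt u (u' a) (Icc a b) a) (hv : HasDerivWithinAt v (v' a) (Icc a b) a)
    (hva : v a = 0) (huv : ∀ x ∈ Ioo a b, 0 < σ * (u x * v x)) :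
    0 ≤ σ * wronskian u u' v v' a := by
  have := ((hu.mul hv).const_mul σ).nonneg_of_left_eq_zero hab (by simp [hva])
    fun x hx => (huv x hx).le
  simpa [wronskian, hva] using this

theorem wronskian_nonpos_of_right_eq_zero {u u' v v' : ℝ → ℝ} {a b σ : ℝ} (hab : a < b)
    (hu : HasDerivWithinAt u (u' b) (Icc a b) b) (hv : HasDerivWithinAt v (v' b) (Icc a b) b)
    (hvb : v b = 0) (huv : ∀ x ∈ Ioo a b, 0 < σ * (u x * v x)) :
    σ * wronskian u u' v v' b ≤ 0 := by
  have := ((hu.mul hv).const_mul σ).nonpos_of_right_eq_zero hab (by simp [hvb])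
    fun x hx => (huv x hx).le
  simpa [wronskian, hvb] using this

namespace IsC2AC

variable {u u' u'' : ℝ → ℝ}

theorem continuousOn (h : IsC2AC u u' u'') : ContinuousOn u (Icc 0 π) :=
  fun x hx => (h.1 x hx).continuousWithinAt

theorem eq_add_integral_deriv (h : IsC2AC u u' u'') :
    ∀ x ∈ Icc 0 π, u x = u 0 + ∫ t in (0 : ℝ)..x, u' t := by
  intro x hx
  have hsub : Icc 0 x ⊆ Icc 0 π := Icc_subset_Icc le_rfl hx.2
  rw [intervalIntegral.integral_eq_sub_of_hasDeriv_right_of_le hx.1 (h.continuousOn.mono hsub)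
    (fun t ht => ?_) ((h.2.1.mono hsub).intervalIntegrable_of_Icc hx.1)]
  · ring
  have ht' : t ∈ Ioo 0 π := ⟨ht.1, ht.2.trans_le hx.2⟩
  exact ((h.1 t (Ioo_subset_Icc_self ht')).hasDerivAt (Icc_mem_nhds ht'.1 ht'.2)).hasDerivWithinAt

theorem intervalIntegrable_deriv (h : IsC2AC u u' u'') : IntervalIntegrable u' volume 0 π :=
  h.2.1.intervalIntegrable_of_Icc pi_pos.le

theorem absolutelyContinuousOnInterval (h : IsC2AC u u' u'') :
    AbsolutelyContinuousOnInterval u 0 π ∧ AbsolutelyContinuousOnInterval u' 0 π := by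
  have hIcc : uIcc 0 π = Icc 0 π := uIcc_of_le pi_pos.le
  exact ⟨absolutelyContinuousOnInterval_of_eq_add_integral h.intervalIntegrable_deriv
      (hIcc ▸ h.eq_add_integral_deriv),
    absolutelyContinuousOnInterval_of_eq_add_integral h.2.2.1 (hIcc ▸ h.2.2.2)⟩

theorem ae_hasDerivAt (h : IsC2AC u u' u'') :
    ∀ᵐ x, x ∈ Ioo 0 π → HasDerivAt u (u' x) x ∧ HasDerivAt u' (u'' x) x := by
  filter_upwards [ae_hasDerivAt_of_eq_add_integral h.intervalIntegrable_deriv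
    h.eq_add_integral_deriv, ae_hasDerivAt_of_eq_add_integral h.2.2.1 h.2.2.2]
    with x hu hu' hx using ⟨hu hx, hu' hx⟩

theorem integral_wronskian {v v' v'' : ℝ → ℝ} (hu : IsC2AC u u' u'')
    (hv : IsC2AC v v' v'') {a b : ℝ} (ha : 0 ≤ a) (hab : a ≤ b) (hb : b ≤ π) :
    ∫ x in a..b, (u x * v'' x - u'' x * v x) = wronskian u u' v v' b - wronskian u u' v v' a := by
  have hsub : uIcc a b ⊆ uIcc 0 π := by
    rw [uIcc_of_le hab, uIcc_of_le pi_pos.le]; exact Icc_subset_Icc ha hb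
  obtain ⟨hu₀, hu₁⟩ := hu.absolutelyContinuousOnInterval
  obtain ⟨hv₀, hv₁⟩ := hv.absolutelyContinuousOnInterval
  refine (((hu₀.mono hsub).fun_mul (hv₁.mono hsub)).fun_sub
    ((hu₁.mono hsub).fun_mul (hv₀.mono hsub))).integral_eq_sub_of_ae_hasDerivAt hab ?_
  filter_upwards [hu.ae_hasDerivAt, hv.ae_hasDerivAt] with x hux hvx hx
  obtain ⟨hu₀x, hu₁x⟩ := hux (Ioo_subset_Ioo ha hb hx)
  obtain ⟨hv₀x, hv₁x⟩ := hvx (Ioo_subset_Ioo ha hb hx)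
  exact ((hu₀x.mul hv₁x).sub (hu₁x.mul hv₀x)).congr_deriv (by ring)

end IsC2AC

theorem IsNPSol.exists_zero_of_nodal_interval {q : ℝ → ℝ} {α lam μ : ℝ} (hμ : μ ≤ lam)
    {u u' u'' v v' v'' : ℝ → ℝ} (hu : IsNPSol q α lam 1 u u' u'') (hv : IsC2AC v v' v'')
    (hve : ∀ᵐ x ∂μI, -v'' x + q x * v x = μ * v x) (hvbc : BC α v v')
    {a b : ℝ} (ha : 0 ≤ a) (hab : a < b) (hb : b ≤ π) (hva : a = 0 ∨ v a = 0)
    (hvb : b = π ∨ v b = 0) (hv0 : ∀ x ∈ Ioo a b, v x ≠ 0) :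
    ∃ z ∈ Ioo a b, u z = 0 := by
  obtain ⟨huC, hue, hubc⟩ := hu
  by_contra! hu0
  have hsub : Icc a b ⊆ Icc 0 π := Icc_subset_Icc ha hb
  have hcont : ContinuousOn (fun x => u x * v x) (Icc a b) :=
    (huC.continuousOn.mul hv.continuousOn).mono hsub
  obtain ⟨σ, hσ⟩ := isPreconnected_Ioo.exists_pos_mul_of_ne_zero
    (hcont.mono Ioo_subset_Icc_self) fun x hx => mul_ne_zero (hu0 x hx) (hv0 x hx)
  have hW : ∫ x in a..b, (lam - μ + u x ^ 2) * (u x * v x)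
      = wronskian u u' v v' b - wronskian u u' v v' a := by
    rw [← huC.integral_wronskian hv ha hab.le hb]
    refine intervalIntegral.integral_congr_ae ?_
    rw [uIoc_of_le hab.le]
    have heqs := (ae_restrict_iff' measurableSet_Ioo).1 (hue.and hve)
    filter_upwards [ae_mem_Ioc_imp_of_ae_mem_Ioo ha hb heqs] with x hx hxab
    linear_combination (-v x) * (hx hxab).1 + u x * (hx hxab).2
  have hpos : 0 < ∫ x in a..b, σ * ((lam - μ + u x ^ 2) * (u x * v x)) := by
    refine intervalIntegral.intervalIntegral_pos_of_pos_on ?_ (fun x hx => ?_) hab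
    · exact (continuousOn_const.mul ((continuousOn_const.add
        ((huC.continuousOn.mono hsub).pow 2)).mul hcont)).intervalIntegrable_of_Icc hab.le
    · have hu2 : 0 < u x ^ 2 := sq_pos_of_ne_zero (hu0 x hx)
      rw [mul_left_comm]
      exact mul_pos (by linarith) (hσ x hx)
  have hWa : 0 ≤ σ * wronskian u u' v v' a := by
    rcases hva with rfl | hva
    · rw [(hubc.wronskian_eq_zero hvbc).1, mul_zero]
    · exact wronskian_nonneg_of_left_eq_zero hab ((huC.1 a ⟨ha, hab.le.trans hb⟩).mono hsub)
        ((hv.1 a ⟨ha, hab.le.trans hb⟩).mono hsub) hva hσ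
  have hWb : σ * wronskian u u' v v' b ≤ 0 := by
    rcases hvb with rfl | hvb
    · rw [(hubc.wronskian_eq_zero hvbc).2, mul_zero]
    · exact wronskian_nonpos_of_right_eq_zero hab ((huC.1 b ⟨ha.trans hab.le, hb⟩).mono hsub)
        ((hv.1 b ⟨ha.trans hab.le, hb⟩).mono hsub) hvb hσ
  rw [intervalIntegral.integral_const_mul, hW] at hpos
  linarith

def nodes (v : ℝ → ℝ) : Set ℝ := insert 0 (insert π (ZeroSet v))

theorem nodes_subset_Icc (v : ℝ → ℝ) : nodes v ⊆ Icc 0 π := by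
  rintro x (rfl | rfl | hx)
  · exact left_mem_Icc.2 pi_pos.le
  · exact right_mem_Icc.2 pi_pos.le
  · exact Ioo_subset_Icc_self hx.1

theorem nodes_finite {v : ℝ → ℝ} (hv : (ZeroSet v).Finite) : (nodes v).Finite :=
  (hv.insert _).insert _

theorem ncard_nodes {v : ℝ → ℝ} (hv : (ZeroSet v).Finite) :
    (nodes v).ncard = (ZeroSet v).ncard + 2 := by
  have h0 : (0 : ℝ) ∉ insert π (ZeroSet v) := by
    rintro (h | h)
    · exact pi_pos.ne h
    · exact h.1.1.false
  rw [nodes, ncard_insert_of_notMem h0 (hv.insert _),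
    ncard_insert_of_notMem (fun h => h.1.2.false) hv]

theorem IsNPSol.exists_mem_zeroSet_between_nodes {q : ℝ → ℝ} {α lam μ : ℝ} (hμ : μ ≤ lam)
    {u u' u'' v v' v'' : ℝ → ℝ} (hu : IsNPSol q α lam 1 u u' u'') (hv : IsC2AC v v' v'')
    (hve : ∀ᵐ x ∂μI, -v'' x + q x * v x = μ * v x) (hvbc : BC α v v') :
    ∀ a ∈ nodes v, ∀ b ∈ nodes v, a < b → (∀ x ∈ Ioo a b, x ∉ nodes v) →
      ∃ z ∈ ZeroSet u, z ∈ Ioo a b := by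
  intro a ha b hb hab hgap
  have ha₀ := (nodes_subset_Icc v ha).1
  have hbπ := (nodes_subset_Icc v hb).2
  have hva : a = 0 ∨ v a = 0 := by
    rcases ha with rfl | rfl | ha
    exacts [Or.inl rfl, absurd (hab.trans_le hbπ) (lt_irrefl _), Or.inr ha.2]
  have hvb : b = π ∨ v b = 0 := by
    rcases hb with rfl | rfl | hb
    exacts [absurd (ha₀.trans_lt hab) (lt_irrefl _), Or.inl rfl, Or.inr hb.2]
  obtain ⟨z, hz, huz⟩ := hu.exists_zero_of_nodal_interval hμ hv hve hvbc ha₀ hab hbπ hva hvb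
    fun x hx hvx => hgap x hx (Or.inr (Or.inr ⟨Ioo_subset_Ioo ha₀ hbπ hx, hvx⟩))
  exact ⟨z, ⟨Ioo_subset_Ioo ha₀ hbπ hz, huz⟩, hz⟩

theorem stmt3_general (q₀ : ℝ → ℝ) (α : ℝ) (k : ℕ)
    (μ : ℝ) (hμ : HasEigenK q₀ α μ k) :
    ∀ lam : ℝ, μ ≤ lam →
      ¬ ∃ u u' u'', IsNPSol q₀ α lam 1 u u' u'' ∧ Nonzero u ∧
        (ZeroSet u).Finite ∧ (ZeroSet u).ncard ≤ k - 1 := by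
  rintro lam hlam ⟨u, u', u'', hu, -, hufin, hucard⟩
  obtain ⟨v, v', v'', ⟨hv, -, hve, -, hvbc⟩, hvfin, hvcard⟩ := hμ
  have hcount := ncard_le_ncard_add_one_of_exists_mem_Ioo (nodes_finite hvfin) hufin
    (hu.exists_mem_zeroSet_between_nodes hlam hv hve hvbc)
  rw [ncard_nodes hvfin] at hcount
  omega

/-- If μ is the k-th eigenvalue of L[q₀], then for every lam ≥ μ the problem (NP_{+1})
has no nonzero solution with at most k-1 zeros in (0,π). -/
theorem stmt3 (q₀ : ℝ → ℝ) (hq₀ : MemL2 q₀) (α : ℝ) (k : ℕ) (hk : 1 ≤ k)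
    (μ : ℝ) (hμ : HasEigenK q₀ α μ k) :
    ∀ lam : ℝ, μ ≤ lam →
      ¬ ∃ u u' u'', IsNPSol q₀ α lam 1 u u' u'' ∧ Nonzero u ∧
        (ZeroSet u).Finite ∧ (ZeroSet u).ncard ≤ k - 1 :=
  stmt3_general q₀ α k μ hμ
end
end

section
/- Let ψ_i(x) := sin(i x) for integers i ≥ 1, and for a > 0 set s_i(a) := √(i² + a) and ρ(a) := Σ_{i=1}^∞ 1/(i² + a). There exists a constant C < ∞, independent of a, such that for all q, f, g ∈ L²(0,π), writing f_i := (2/π)∫₀^π f(x) ψ_i(x) dx and g_j := (2/π)∫₀^π g(x) ψ_j(x) dx for the sine-Fourier coefficients, one has Σ_{i=1}^∞ Σ_{j=1}^∞ (|f_i| |g_j| / (s_i(a) s_j(a))) · |∫₀^π q(x) ψ_i(x) ψ_j(x) dx| ≤ C ρ(a) ‖q‖_{L²(0,π)} ‖f‖_{L²(0,π)} ‖g‖_{L²(0,π)}. -/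
open MeasureTheory Set Real

noncomputable section

/-- The i-th Dirichlet eigenfunction sin(i x) of -d²/dx² on (0,π), indexed by i ≥ 1
(here the index n : ℕ corresponds to i = n+1). -/
def ψs (n : ℕ) : ℝ → ℝ := fun x => Real.sin (((n : ℝ) + 1) * x)

/-- The sine-Fourier coefficient of f with respect to sin((n+1) x). -/
def sineCoeff (f : ℝ → ℝ) (n : ℕ) : ℝ :=
  (2 / Real.pi) * ∫ x in Set.Ioo (0:ℝ) Real.pi, f x * ψs n x

/-- s_i(a) = √(i² + a), with i = n+1. -/
def sa (n : ℕ) (a : ℝ) : ℝ := Real.sqrt (((n : ℝ) + 1) ^ 2 + a)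

/-- ρ(a) = Σ_{i≥1} 1/(i² + a). -/
def ρa (a : ℝ) : ℝ := ∑' n : ℕ, 1 / (((n : ℝ) + 1) ^ 2 + a)

/-!
Normalize the sines to the orthonormal family `eₙ = √(2/π) ψₙ` of `L²(0,π)`. Then
`|g_j| |∫ q ψ_i ψ_j| = |⟪e_j, g⟫| |⟪e_j, q ψ_i⟫|` exactly, so Cauchy–Schwarz and Bessel's
inequality give `Σ_j |g_j| |∫ q ψ_i ψ_j| ≤ ‖g‖ ‖q ψ_i‖ ≤ ‖g‖ ‖q‖`. Splitting
`1/(s_i s_j) ≤ 1/s_i² + 1/s_j²` and using `|f_i| ≤ ‖f‖`, the double series is at most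
`ρ(a) ‖f‖ ‖g‖ ‖q‖` twice over (once with the roles of `f` and `g` exchanged), so `C = 2` works.
-/

section Orthonormal
variable {𝕜 E ι : Type*} [RCLike 𝕜] [NormedAddCommGroup E] [InnerProductSpace 𝕜 E]
  {v : ι → E}

theorem Orthonormal.sum_norm_inner_mul_le (hv : Orthonormal 𝕜 v) (x y : E) (s : Finset ι) :
    ∑ i ∈ s, ‖(inner 𝕜 (v i) x : 𝕜)‖ * ‖(inner 𝕜 (v i) y : 𝕜)‖ ≤ ‖x‖ * ‖y‖ := by
  refine le_of_pow_le_pow_left₀ two_ne_zero (by positivity) ?_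
  calc (∑ i ∈ s, ‖(inner 𝕜 (v i) x : 𝕜)‖ * ‖(inner 𝕜 (v i) y : 𝕜)‖) ^ 2
      ≤ (∑ i ∈ s, ‖(inner 𝕜 (v i) x : 𝕜)‖ ^ 2) * ∑ i ∈ s, ‖(inner 𝕜 (v i) y : 𝕜)‖ ^ 2 :=
        Finset.sum_mul_sq_le_sq_mul_sq _ _ _
    _ ≤ ‖x‖ ^ 2 * ‖y‖ ^ 2 :=
        mul_le_mul (hv.sum_inner_products_le x) (hv.sum_inner_products_le y)
          (by positivity) (by positivity)
    _ = (‖x‖ * ‖y‖) ^ 2 := (mul_pow _ _ _).symm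

theorem Orthonormal.tsum_enorm_inner_mul_le (hv : Orthonormal 𝕜 v) (x y : E) :
    ∑' i, ‖(inner 𝕜 (v i) x : 𝕜)‖ₑ * ‖(inner 𝕜 (v i) y : 𝕜)‖ₑ ≤ ‖x‖ₑ * ‖y‖ₑ := by
  refine ENNReal.summable.tsum_le_of_sum_le fun s => ?_
  simp only [← ofReal_norm, ← ENNReal.ofReal_mul (norm_nonneg _)]
  rw [← ENNReal.ofReal_sum_of_nonneg (fun i _ => by positivity)]
  exact ENNReal.ofReal_le_ofReal (hv.sum_norm_inner_mul_le x y s)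

end Orthonormal

theorem integral_cos_int_mul_eq_zero {k : ℤ} (hk : k ≠ 0) :
    ∫ x in (0:ℝ)..π, cos (k * x) = 0 := by
  rw [intervalIntegral.integral_comp_mul_left cos (Int.cast_ne_zero.mpr hk)]
  simp [sin_int_mul_pi]

theorem integral_ψs_mul_ψs (i j : ℕ) :
    ∫ x in Ioo 0 π, ψs i x * ψs j x = if i = j then π / 2 else 0 := by
  rw [← integral_Ioc_eq_integral_Ioo, ← intervalIntegral.integral_of_le pi_pos.le]
  have hprod (x : ℝ) : ψs i x * ψs j x =
      (cos (((i - j : ℤ) : ℝ) * x) - cos (((i + j + 2 : ℤ) : ℝ) * x)) / 2 := by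
    simp only [ψs]
    push_cast
    rw [show ((i:ℝ) - j) * x = ((i:ℝ) + 1) * x - ((j:ℝ) + 1) * x by ring,
      show ((i:ℝ) + j + 2) * x = ((i:ℝ) + 1) * x + ((j:ℝ) + 1) * x by ring, cos_sub, cos_add]
    ring
  have hcos : ∀ c : ℝ, IntervalIntegrable (fun x => cos (c * x)) volume 0 π :=
    fun c => (continuous_cos.comp (continuous_const_mul c)).intervalIntegrable _ _
  simp_rw [hprod]
  rw [intervalIntegral.integral_div, intervalIntegral.integral_sub (hcos _) (hcos _),
    integral_cos_int_mul_eq_zero (k := i + j + 2) (by omega)]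
  split_ifs with h
  · simp [h]
  · rw [integral_cos_int_mul_eq_zero (by omega)]
    simp

instance : IsFiniteMeasure μI := isFiniteMeasure_restrict_Ioo 0 π

theorem abs_ψs_le_one (n : ℕ) (x : ℝ) : |ψs n x| ≤ 1 := abs_sin_le_one _

theorem memLp_ψs (n : ℕ) : MemLp (ψs n) 2 μI :=
  .of_bound (continuous_sin.comp (continuous_const_mul _)).aestronglyMeasurable 1
    (.of_forall fun x => abs_ψs_le_one n x)

theorem eLpNorm_mul_ψs_le (q : ℝ → ℝ) (n : ℕ) :
    eLpNorm (fun x => q x * ψs n x) 2 μI ≤ eLpNorm q 2 μI :=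
  eLpNorm_mono fun x => by
    simpa [abs_mul] using mul_le_of_le_one_right (abs_nonneg _) (abs_ψs_le_one n x)

theorem MemLp.mul_ψs {q : ℝ → ℝ} (hq : MemLp q 2 μI) (n : ℕ) :
    MemLp (fun x => q x * ψs n x) 2 μI :=
  ⟨hq.1.mul (memLp_ψs n).1, (eLpNorm_mul_ψs_le q n).trans_lt hq.2⟩

def sineBasis (n : ℕ) : Lp ℝ 2 μI := √(2 / π) • (memLp_ψs n).toLp (ψs n)

theorem inner_sineBasis_toLp {h : ℝ → ℝ} (hh : MemLp h 2 μI) (n : ℕ) :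
    inner ℝ (sineBasis n) (hh.toLp h) = √(2 / π) * ∫ x in Ioo 0 π, h x * ψs n x := by
  rw [sineBasis, real_inner_smul_left, L2.inner_def]
  congr 1
  refine integral_congr_ae ?_
  filter_upwards [(memLp_ψs n).coeFn_toLp, hh.coeFn_toLp] with x hψ hx
  simp [hψ, hx]

theorem orthonormal_sineBasis : Orthonormal ℝ sineBasis := by
  rw [orthonormal_iff_ite]
  intro i j
  change inner ℝ (sineBasis i) (√(2 / π) • (memLp_ψs j).toLp (ψs j)) = _
  rw [real_inner_smul_right, inner_sineBasis_toLp, ← mul_assoc,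
    mul_self_sqrt (by positivity), integral_ψs_mul_ψs]
  rcases eq_or_ne i j with rfl | hij
  · simp only [if_true]
    field_simp
  · simp [hij, hij.symm]

theorem sineCoeff_eq_inner {f : ℝ → ℝ} (hf : MemLp f 2 μI) (n : ℕ) :
    sineCoeff f n = √(2 / π) * inner ℝ (sineBasis n) (hf.toLp f) := by
  rw [inner_sineBasis_toLp, ← mul_assoc, mul_self_sqrt (by positivity), sineCoeff]

theorem sqrt_two_div_pi_mul_sqrt_pi_div_two : √(2 / π) * √(π / 2) = 1 := by
  rw [← sqrt_mul (by positivity)]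
  field_simp
  simp

theorem integral_mul_ψs_eq_inner {h : ℝ → ℝ} (hh : MemLp h 2 μI) (n : ℕ) :
    ∫ x in Ioo 0 π, h x * ψs n x = √(π / 2) * inner ℝ (sineBasis n) (hh.toLp h) := by
  rw [inner_sineBasis_toLp, ← mul_assoc, mul_comm √(π / 2),
    sqrt_two_div_pi_mul_sqrt_pi_div_two, one_mul]

theorem l2norm_nonneg (f : ℝ → ℝ) : 0 ≤ l2norm f := ENNReal.toReal_nonneg

theorem l2norm_eq_norm_toLp {f : ℝ → ℝ} (hf : MemLp f 2 μI) : l2norm f = ‖hf.toLp f‖ :=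
  (Lp.norm_toLp f hf).symm

theorem abs_sineCoeff_le {f : ℝ → ℝ} (hf : MemLp f 2 μI) (n : ℕ) :
    |sineCoeff f n| ≤ l2norm f := by
  have hsqrt : √(2 / π) ≤ 1 := sqrt_le_one.mpr ((div_le_one pi_pos).mpr two_le_pi)
  rw [sineCoeff_eq_inner hf, abs_mul, abs_of_nonneg (sqrt_nonneg _), l2norm_eq_norm_toLp hf]
  calc √(2 / π) * |inner ℝ (sineBasis n) (hf.toLp f)|
      ≤ 1 * (‖sineBasis n‖ * ‖hf.toLp f‖) :=
        mul_le_mul hsqrt (abs_real_inner_le_norm _ _) (abs_nonneg _) zero_le_one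
    _ = ‖hf.toLp f‖ := by rw [orthonormal_sineBasis.1 n, one_mul, one_mul]

theorem tsum_abs_sineCoeff_mul_abs_integral_le {g h : ℝ → ℝ} (hg : MemLp g 2 μI)
    (hh : MemLp h 2 μI) :
    ∑' n, ENNReal.ofReal (|sineCoeff g n| * |∫ x in Ioo 0 π, h x * ψs n x|) ≤
      ENNReal.ofReal (l2norm g * l2norm h) := by
  have hterm (n : ℕ) : |sineCoeff g n| * |∫ x in Ioo 0 π, h x * ψs n x| =
      ‖inner ℝ (sineBasis n) (hg.toLp g)‖ * ‖inner ℝ (sineBasis n) (hh.toLp h)‖ := by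
    rw [sineCoeff_eq_inner hg, integral_mul_ψs_eq_inner hh, abs_mul, abs_mul,
      abs_of_nonneg (sqrt_nonneg _), abs_of_nonneg (sqrt_nonneg _), mul_mul_mul_comm,
      sqrt_two_div_pi_mul_sqrt_pi_div_two, one_mul, Real.norm_eq_abs, Real.norm_eq_abs]
  rw [tsum_congr fun n => by rw [hterm n], l2norm_eq_norm_toLp hg, l2norm_eq_norm_toLp hh]
  simp_rw [ENNReal.ofReal_mul (norm_nonneg _), ofReal_norm]
  exact orthonormal_sineBasis.tsum_enorm_inner_mul_le _ _

theorem summable_one_div_sq_add {a : ℝ} (ha : 0 ≤ a) :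
    Summable fun n : ℕ => 1 / (((n : ℝ) + 1) ^ 2 + a) := by
  have hsq : Summable fun n : ℕ => 1 / ((n : ℝ) + 1) ^ 2 := by
    simpa using (summable_nat_add_iff 1).mpr (summable_one_div_nat_pow.mpr one_lt_two)
  refine hsq.of_nonneg_of_le (fun n => by positivity) fun n => ?_
  gcongr
  linarith

theorem l2norm_mul_ψs_le {q : ℝ → ℝ} (hq : MemLp q 2 μI) (n : ℕ) :
    l2norm (fun x => q x * ψs n x) ≤ l2norm q :=
  ENNReal.toReal_mono hq.2.ne (eLpNorm_mul_ψs_le q n)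

theorem tsum_tsum_weighted_sineCoeff_le {w : ℕ → ℝ} (hw0 : ∀ i, 0 ≤ w i) (hw : Summable w)
    {q f g : ℝ → ℝ} (hq : MemLp q 2 μI) (hf : MemLp f 2 μI) (hg : MemLp g 2 μI) :
    ∑' i, ∑' j, ENNReal.ofReal (w i * |sineCoeff f i| *
        (|sineCoeff g j| * |∫ x in Ioo 0 π, q x * ψs i x * ψs j x|)) ≤
      ENNReal.ofReal ((∑' i, w i) * l2norm f * (l2norm g * l2norm q)) := by
  calc _ = ∑' i, ENNReal.ofReal (w i * |sineCoeff f i|) *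
        ∑' j, ENNReal.ofReal (|sineCoeff g j| * |∫ x in Ioo 0 π, q x * ψs i x * ψs j x|) := by
        congr! 2 with i
        rw [← ENNReal.tsum_mul_left]
        congr! 2 with j
        exact ENNReal.ofReal_mul (mul_nonneg (hw0 i) (abs_nonneg _))
    _ ≤ ∑' i, ENNReal.ofReal (w i * l2norm f) * ENNReal.ofReal (l2norm g * l2norm q) := by
        gcongr with i
        · exact hw0 i
        · exact abs_sineCoeff_le hf i
        · refine (tsum_abs_sineCoeff_mul_abs_integral_le hg (MemLp.mul_ψs hq i)).trans ?_
          gcongr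
          · exact l2norm_nonneg g
          · exact l2norm_mul_ψs_le hq i
    _ = _ := by
        rw [ENNReal.tsum_mul_right, ← ENNReal.ofReal_tsum_of_nonneg
          (fun i => mul_nonneg (hw0 i) (l2norm_nonneg f)) (hw.mul_right _), tsum_mul_right,
          ← ENNReal.ofReal_mul (mul_nonneg (tsum_nonneg hw0) (l2norm_nonneg f))]

theorem one_div_mul_le_one_div_sq_add_one_div_sq {s t : ℝ} (hs : 0 < s) (ht : 0 < t) :
    1 / (s * t) ≤ 1 / s ^ 2 + 1 / t ^ 2 := by
  rw [div_add_div _ _ (by positivity) (by positivity), div_le_div_iff₀ (by positivity)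
    (by positivity)]
  nlinarith [sq_nonneg (s - t), mul_pos hs ht, mul_pos (mul_pos hs ht) (mul_pos hs ht)]

theorem ofReal_mul_div_mul_le {F G Q s t : ℝ} (hF : 0 ≤ F) (hG : 0 ≤ G) (hQ : 0 ≤ Q)
    (hs : 0 < s) (ht : 0 < t) :
    ENNReal.ofReal (F * G / (s * t) * Q) ≤
      ENNReal.ofReal (1 / s ^ 2 * F * (G * Q)) + ENNReal.ofReal (1 / t ^ 2 * G * (F * Q)) := by
  refine (ENNReal.ofReal_le_ofReal ?_).trans ENNReal.ofReal_add_le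
  calc F * G / (s * t) * Q = 1 / (s * t) * (F * G * Q) := by ring
    _ ≤ (1 / s ^ 2 + 1 / t ^ 2) * (F * G * Q) := by
        gcongr
        exact one_div_mul_le_one_div_sq_add_one_div_sq hs ht
    _ = 1 / s ^ 2 * F * (G * Q) + 1 / t ^ 2 * G * (F * Q) := by ring

theorem sa_pos (n : ℕ) {a : ℝ} (ha : 0 ≤ a) : 0 < sa n a := sqrt_pos.mpr (by positivity)

theorem one_div_sa_sq (n : ℕ) {a : ℝ} (ha : 0 ≤ a) :
    1 / sa n a ^ 2 = 1 / (((n : ℝ) + 1) ^ 2 + a) := by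
  rw [sa, sq_sqrt (by positivity)]

theorem integral_mul_ψs_mul_ψs_comm (q : ℝ → ℝ) (i j : ℕ) :
    ∫ x in Ioo 0 π, q x * ψs i x * ψs j x = ∫ x in Ioo 0 π, q x * ψs j x * ψs i x := by
  simp_rw [mul_right_comm]

/-- Key bilinear estimate for R(a) Q R(a): there is a constant C, independent of a > 0,
such that for all q, f, g ∈ L²(0,π) the double series
Σ_i Σ_j |f_i||g_j|/(s_i(a)s_j(a)) |∫ q ψ_i ψ_j| is bounded by
C ρ(a) ‖q‖_{L²} ‖f‖_{L²} ‖g‖_{L²}. -/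
theorem stmt12 :
    ∃ C : ℝ,
      ∀ a : ℝ, 0 < a → ∀ q f g : ℝ → ℝ, MemL2 q → MemL2 f → MemL2 g →
        (∑' i : ℕ, ∑' j : ℕ,
            ENNReal.ofReal
              (|sineCoeff f i| * |sineCoeff g j| / (sa i a * sa j a) *
                |∫ x in Set.Ioo (0:ℝ) Real.pi, q x * ψs i x * ψs j x|)) ≤
          ENNReal.ofReal (C * ρa a * l2norm q * l2norm f * l2norm g) := by
  refine ⟨2, fun a ha q f g hq hf hg => ?_⟩
  set w : ℕ → ℝ := fun n => 1 / (((n : ℝ) + 1) ^ 2 + a)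
  have hw0 (n : ℕ) : 0 ≤ w n := by positivity
  have hw : Summable w := summable_one_div_sq_add ha.le
  have hw_sa (n : ℕ) : w n = 1 / sa n a ^ 2 := (one_div_sa_sq n ha.le).symm
  calc _ ≤ ∑' i, ∑' j,
        (ENNReal.ofReal (w i * |sineCoeff f i| *
            (|sineCoeff g j| * |∫ x in Ioo 0 π, q x * ψs i x * ψs j x|)) +
          ENNReal.ofReal (w j * |sineCoeff g j| *
            (|sineCoeff f i| * |∫ x in Ioo 0 π, q x * ψs j x * ψs i x|))) := by
        gcongr with i j
        rw [hw_sa i, hw_sa j, integral_mul_ψs_mul_ψs_comm q j i]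
        exact ofReal_mul_div_mul_le (abs_nonneg _) (abs_nonneg _) (abs_nonneg _)
          (sa_pos i ha.le) (sa_pos j ha.le)
    _ ≤ ENNReal.ofReal (ρa a * l2norm f * (l2norm g * l2norm q)) +
        ENNReal.ofReal (ρa a * l2norm g * (l2norm f * l2norm q)) := by
        simp_rw [ENNReal.tsum_add]
        refine add_le_add (tsum_tsum_weighted_sineCoeff_le hw0 hw hq hf hg) ?_
        rw [ENNReal.tsum_comm]
        exact tsum_tsum_weighted_sineCoeff_le hw0 hw hq hg hf
    _ = ENNReal.ofReal (2 * ρa a * l2norm q * l2norm f * l2norm g) := by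
        have : 0 ≤ ρa a := tsum_nonneg hw0
        have := l2norm_nonneg q
        have := l2norm_nonneg f
        have := l2norm_nonneg g
        rw [← ENNReal.ofReal_add (by positivity) (by positivity)]
        ring_nf
end
end
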